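/- Let f ∈ C[0,1]. If the sequences a_0(n), a_1(n) satisfy 2a_0(n) + a_1(n) = 1, a_0(n) ≥ 0, and a_0(n) + a_1(n) ≥ 0 for all n, then D_n^{M,1}(f; x) converges to f(x) uniformly on [0,1] as n → ∞. -/

import Mathlib

/-!
`D_n^{M,1}(f; x) = ∫₀¹ K_n(x, t) f(t) dt` with kernel
`K_n(x, t) = (n + 1) ∑ₖ p_{n,k}^{M,1}(x) p_{n,k}(t)`, and the proof is Korovkin's argument for
this kernel. The hypotheses make the weights `a(x, n)` and `a(1 - x, n)` nonnegative on `[0, 1]`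
with sum `1`, so `K_n ≥ 0` and `∫ K_n(x, ·) = 1`. Since `t p_{n,k}(t) = (k+1)/(n+1) p_{n+1,k+1}(t)`
and every `p_{n,k}` has integral `1/(n+1)`, the Durrmeyer moments are explicit, and the Bernstein
sums of `1, j, j(j-1)` turn the second central moment `∫ K_n(x, t) (t - x)² dt` into a rational
function of `n` and `x` bounded by `1/n`. Uniform continuity gives
`|f t - f x| ≤ ε + κ (t - x)²`, whence `|D_n^{M,1}(f; x) - f x| ≤ ε + κ/n`.
-/
open Filter Topology

/-- Bernstein basis polynomial `p_{n,k}(x)`, zero when `k < 0` or `k > n`. -/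
noncomputable def bern (n : ℕ) (k : ℤ) (x : ℝ) : ℝ :=
  if 0 ≤ k ∧ k ≤ (n : ℤ) then (n.choose k.toNat : ℝ) * x ^ k.toNat * (1 - x) ^ (n - k.toNat)
  else 0

/-- Modified Bernstein basis `p_{n,k}^{M,1}(x)` of Khosravian-Arab et al. -/
noncomputable def pM1 (a0 a1 : ℕ → ℝ) (n : ℕ) (k : ℤ) (x : ℝ) : ℝ :=
  (a1 n * x + a0 n) * bern (n - 1) k x + (a1 n * (1 - x) + a0 n) * bern (n - 1) (k - 1) x

/-- First-order modified Durrmeyer operator `D_n^{M,1}(f;x)`. -/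
noncomputable def DM1 (a0 a1 : ℕ → ℝ) (n : ℕ) (f : ℝ → ℝ) (x : ℝ) : ℝ :=
  ((n : ℝ) + 1) * ∑ k ∈ Finset.range (n + 1),
    pM1 a0 a1 n k x * ∫ t in (0:ℝ)..1, bern n k t * f t

open Set intervalIntegral Polynomial
open MeasureTheory (volume)

theorem IsCompact.exists_abs_sub_le_add_mul_sq {s : Set ℝ} (hs : IsCompact s) {f : ℝ → ℝ}
    (hf : ContinuousOn f s) {ε : ℝ} (hε : 0 < ε) :
    ∃ κ, 0 ≤ κ ∧ ∀ x ∈ s, ∀ t ∈ s, |f t - f x| ≤ ε + κ * (t - x) ^ 2 := by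
  obtain ⟨M, hM⟩ := hs.exists_bound_of_continuousOn hf
  obtain ⟨δ, hδ, hfδ⟩ :=
    Metric.uniformContinuousOn_iff.mp (hs.uniformContinuousOn_of_continuous hf) ε hε
  have hκ : 0 ≤ 2 * |M| / δ ^ 2 := by positivity
  refine ⟨2 * |M| / δ ^ 2, hκ, fun x hx t ht => ?_⟩
  rcases lt_or_ge |t - x| δ with hnear | hfar
  · have := hfδ t ht x hx hnear
    rw [Real.dist_eq] at this
    linarith [mul_nonneg hκ (sq_nonneg (t - x))]
  · have hδ_sq : δ ^ 2 ≤ (t - x) ^ 2 := by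
      simpa only [sq_abs] using pow_le_pow_left₀ hδ.le hfar 2
    have h2M : 2 * |M| ≤ 2 * |M| / δ ^ 2 * (t - x) ^ 2 := by
      rw [div_mul_eq_mul_div, le_div_iff₀ (by positivity)]
      exact mul_le_mul_of_nonneg_left hδ_sq (by positivity)
    have hft := hM t ht
    have hfx := hM x hx
    rw [Real.norm_eq_abs] at hft hfx
    linarith [abs_sub (f t) (f x), le_abs_self M]

theorem tendstoUniformlyOn_integral_mul_of_kernel {a b : ℝ} (hab : a ≤ b) {K : ℕ → ℝ → ℝ → ℝ}
    {β : ℕ → ℝ} (hK : ∀ n x, ContinuousOn (K n x) (Icc a b))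
    (hK_nonneg : ∀ᶠ n in atTop, ∀ x ∈ Icc a b, ∀ t ∈ Icc a b, 0 ≤ K n x t)
    (hK_mass : ∀ᶠ n in atTop, ∀ x ∈ Icc a b, ∫ t in a..b, K n x t = 1)
    (hK_var : ∀ᶠ n in atTop, ∀ x ∈ Icc a b, ∫ t in a..b, K n x t * (t - x) ^ 2 ≤ β n)
    (hβ : Tendsto β atTop (𝓝 0)) {f : ℝ → ℝ} (hf : ContinuousOn f (Icc a b)) :
    TendstoUniformlyOn (fun n x => ∫ t in a..b, K n x t * f t) f atTop (Icc a b) := by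
  rw [Metric.tendstoUniformlyOn_iff]
  intro ε hε
  obtain ⟨κ, hκ, hf_le⟩ := isCompact_Icc.exists_abs_sub_le_add_mul_sq hf (half_pos hε)
  have hβ_small : ∀ᶠ n in atTop, κ * β n < ε / 2 := by
    have : Tendsto (fun n => κ * β n) atTop (𝓝 0) := by simpa using hβ.const_mul κ
    exact this.eventually (gt_mem_nhds (half_pos hε))
  have hint : ∀ {g : ℝ → ℝ}, ContinuousOn g (Icc a b) → IntervalIntegrable g volume a b :=
    fun hg => hg.intervalIntegrable_of_Icc hab
  filter_upwards [hK_nonneg, hK_mass, hK_var, hβ_small] with n hpos hmass hvar hsmall x hx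
  have hKx := hK n x
  have hsplit : ∀ t, K n x t * (ε / 2 + κ * (t - x) ^ 2)
      = ε / 2 * K n x t + κ * (K n x t * (t - x) ^ 2) := fun t => by ring
  calc dist (f x) (∫ t in a..b, K n x t * f t)
      = |∫ t in a..b, K n x t * (f t - f x)| := by
        simp_rw [mul_sub]
        rw [dist_comm, Real.dist_eq, integral_sub (hint (by fun_prop)) (hint (by fun_prop)),
          integral_mul_const, hmass x hx, one_mul]
    _ ≤ ∫ t in a..b, K n x t * |f t - f x| := by
        refine (abs_integral_le_integral_abs hab).trans
          (integral_mono_on hab (hint (by fun_prop)) (hint (by fun_prop)) fun t ht => ?_)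
        rw [abs_mul, abs_of_nonneg (hpos x hx t ht)]
    _ ≤ ∫ t in a..b, K n x t * (ε / 2 + κ * (t - x) ^ 2) :=
        integral_mono_on hab (hint (by fun_prop)) (hint (by fun_prop)) fun t ht =>
          mul_le_mul_of_nonneg_left (hf_le x hx t ht) (hpos x hx t ht)
    _ = ε / 2 + κ * ∫ t in a..b, K n x t * (t - x) ^ 2 := by
        simp_rw [hsplit]
        rw [integral_add (hint (by fun_prop)) (hint (by fun_prop)), integral_const_mul,
          integral_const_mul, hmass x hx, mul_one]
    _ < ε := by nlinarith [hvar x hx]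

lemma bern_natCast_eq_eval (n k : ℕ) (x : ℝ) :
    bern n k x = (bernsteinPolynomial ℝ n k).eval x := by
  rcases le_or_gt k n with hk | hk
  · simp [bern, bernsteinPolynomial, hk]
  · simp [bern, bernsteinPolynomial.eq_zero_of_lt ℝ hk, hk.not_ge]

lemma bern_neg_one (n : ℕ) (x : ℝ) : bern n (-1) x = 0 := by simp [bern]

@[fun_prop]
lemma continuous_bern (n : ℕ) (k : ℤ) : Continuous (bern n k) := by
  unfold bern
  split_ifs <;> fun_prop

lemma bern_nonneg (n : ℕ) (k : ℤ) {x : ℝ} (hx : x ∈ Icc (0 : ℝ) 1) : 0 ≤ bern n k x := by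
  unfold bern
  split_ifs
  · exact mul_nonneg (mul_nonneg (by positivity) (pow_nonneg hx.1 _))
      (pow_nonneg (sub_nonneg.2 hx.2) _)
  · rfl

lemma sum_bern (m : ℕ) (x : ℝ) : ∑ j ∈ Finset.range (m + 1), bern m j x = 1 := by
  simpa [bern_natCast_eq_eval, eval_finsetSum] using
    congrArg (eval x) (bernsteinPolynomial.sum ℝ m)

lemma sum_mul_bern (m : ℕ) (x : ℝ) :
    ∑ j ∈ Finset.range (m + 1), (j : ℝ) * bern m j x = m * x := by
  simpa [bern_natCast_eq_eval, eval_finsetSum] using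
    congrArg (eval x) (bernsteinPolynomial.sum_smul ℝ m)

lemma sum_mul_sub_one_mul_bern (m : ℕ) (x : ℝ) :
    ∑ j ∈ Finset.range (m + 1), (j : ℝ) * (j - 1) * bern m j x = m * (m - 1) * x ^ 2 := by
  have h := congrArg (eval x) (bernsteinPolynomial.sum_mul_smul ℝ m)
  have cast_sub_one : ∀ j : ℕ, ((j * (j - 1) : ℕ) : ℝ) = j * ((j : ℝ) - 1) := by
    rintro (_ | j) <;> simp
  simpa only [eval_finsetSum, nsmul_eq_mul, eval_mul, eval_natCast, eval_pow, eval_X,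
    cast_sub_one, bern_natCast_eq_eval] using h

/-- `p_{n+1,k+1}' = (n + 1) (p_{n,k} - p_{n,k+1})`, and `p_{n+1,k+1}` vanishes at `0` and `1`. -/
lemma integral_bern_succ (n k : ℕ) (hk : k < n) :
    ∫ t in (0 : ℝ)..1, bern n (k + 1 : ℕ) t = ∫ t in (0 : ℝ)..1, bern n k t := by
  set p := bernsteinPolynomial ℝ (n + 1) (k + 1)
  have hp : ∫ t in (0 : ℝ)..1, (derivative p).eval t = 0 := by
    rw [integral_eq_sub_of_hasDerivAt (fun t _ => p.hasDerivAt t)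
      (p.derivative.continuous.intervalIntegrable _ _)]
    simp [p, bernsteinPolynomial.eval_at_0, bernsteinPolynomial.eval_at_1, hk.ne]
  rw [bernsteinPolynomial.derivative_succ] at hp
  simp only [eval_mul, eval_sub, eval_natCast, Nat.add_sub_cancel] at hp
  rw [integral_const_mul, integral_sub ((Polynomial.continuous _).intervalIntegrable _ _)
    ((Polynomial.continuous _).intervalIntegrable _ _)] at hp
  simp only [bern_natCast_eq_eval]
  have : ((n : ℝ) + 1) ≠ 0 := by positivity
  push_cast at hp
  linarith [(mul_eq_zero.mp hp).resolve_left this]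

lemma integral_bern (n k : ℕ) (hk : k ≤ n) :
    ∫ t in (0 : ℝ)..1, bern n k t = 1 / (n + 1) := by
  induction k with
  | zero =>
    simp only [bern_natCast_eq_eval, bernsteinPolynomial, Nat.choose_zero_right, Nat.cast_one,
      pow_zero, one_mul, Nat.sub_zero, eval_pow, eval_sub, eval_one, eval_X]
    simp [integral_comp_sub_left (fun t => t ^ n)]
  | succ k ih => rw [integral_bern_succ n k hk, ih (by omega)]

lemma mul_bern (n k : ℕ) (t : ℝ) :
    t * bern n k t = (k + 1) / (n + 1) * bern (n + 1) (k + 1 : ℕ) t := by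
  rcases le_or_gt k n with hk | hk
  · have hchoose : ((n + 1).choose (k + 1) : ℝ) * (k + 1) = (n + 1) * n.choose k := by
      exact_mod_cast (Nat.add_one_mul_choose_eq n k).symm
    simp only [bern_natCast_eq_eval, bernsteinPolynomial, eval_mul, eval_pow, eval_sub, eval_one,
      eval_X, eval_natCast, Nat.add_sub_add_right]
    field_simp
    linear_combination t * t ^ k * (1 - t) ^ (n - k) * hchoose.symm
  · simp only [bern_natCast_eq_eval, bernsteinPolynomial.eq_zero_of_lt ℝ hk,
      bernsteinPolynomial.eq_zero_of_lt ℝ (Nat.succ_lt_succ hk), eval_zero, mul_zero]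

lemma integral_bern_mul_sq_sub (n k : ℕ) (hk : k ≤ n) (x : ℝ) :
    (n + 1) * ∫ t in (0 : ℝ)..1, bern n k t * (t - x) ^ 2
      = (k + 1) * (k + 2) / ((n + 2) * (n + 3)) - 2 * x * (k + 1) / (n + 2) + x ^ 2 := by
  have expand : ∀ t, bern n k t * (t - x) ^ 2
      = (k + 1) * (k + 2) / ((n + 1) * (n + 2)) * bern (n + 1 + 1) (k + 1 + 1 : ℕ) t
        - 2 * x * (k + 1) / (n + 1) * bern (n + 1) (k + 1 : ℕ) t + x ^ 2 * bern n k t := by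
    intro t
    rw [show bern n k t * (t - x) ^ 2
        = t * (t * bern n k t) - 2 * x * (t * bern n k t) + x ^ 2 * bern n k t by ring,
      mul_bern n k, mul_left_comm t, mul_bern (n + 1) (k + 1)]
    push_cast
    field_simp
    ring
  have hint : ∀ (m : ℕ) (j : ℤ) (c : ℝ),
      IntervalIntegrable (fun t => c * bern m j t) volume 0 1 :=
    fun m j c => ((continuous_bern m j).const_mul c).intervalIntegrable 0 1
  simp_rw [expand]
  rw [integral_add ((hint _ _ _).sub (hint _ _ _)) (hint _ _ _),
    integral_sub (hint _ _ _) (hint _ _ _), integral_const_mul, integral_const_mul,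
    integral_const_mul, integral_bern _ _ (by omega), integral_bern _ _ (by omega),
    integral_bern _ _ hk]
  push_cast
  field_simp
  ring

/-- The summand is `bern m j x * ((m + 2) ∫ p_{m+1,j+i}(t) (t - x)² dt)`, by
`integral_bern_mul_sq_sub`. -/
lemma sum_bern_mul_shifted_moment (m i : ℕ) (x : ℝ) :
    ∑ j ∈ Finset.range (m + 1), bern m j x *
        ((j + i + 1) * (j + i + 2) / ((m + 3) * (m + 4)) - 2 * x * (j + i + 1) / (m + 3) + x ^ 2)
      = (2 * m * x * (1 - x) + 12 * x ^ 2 - 8 * ((i : ℝ) + 1) * x + (i + 1) * (i + 2))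
          / ((m + 3) * (m + 4)) := by
  have split : ∀ j : ℕ, bern m j x *
        ((j + i + 1) * (j + i + 2) / ((m + 3) * (m + 4)) - 2 * x * (j + i + 1) / (m + 3) + x ^ 2)
      = 1 / ((m + 3) * (m + 4)) * ((j : ℝ) * (j - 1) * bern m j x)
        + ((2 * i + 4) / ((m + 3) * (m + 4)) - 2 * x / (m + 3)) * ((j : ℝ) * bern m j x)
        + ((i + 1) * (i + 2) / ((m + 3) * (m + 4)) - 2 * x * (i + 1) / (m + 3) + x ^ 2)
          * bern m j x := fun j => by
    field_simp
    ring
  simp_rw [split]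
  rw [Finset.sum_add_distrib, Finset.sum_add_distrib, ← Finset.mul_sum, ← Finset.mul_sum,
    ← Finset.mul_sum, sum_mul_sub_one_mul_bern, sum_mul_bern, sum_bern]
  field_simp
  ring

lemma sum_bern_mul_shifted_moment_le (m i : ℕ) (hi : i ≤ 1) {x : ℝ} (hx : x ∈ Icc (0 : ℝ) 1) :
    ∑ j ∈ Finset.range (m + 1), bern m j x *
        ((j + i + 1) * (j + i + 2) / ((m + 3) * (m + 4)) - 2 * x * (j + i + 1) / (m + 3) + x ^ 2)
      ≤ 1 / ((m : ℝ) + 1) := by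
  obtain ⟨hx0, hx1⟩ := hx
  have hm : (0 : ℝ) ≤ m := Nat.cast_nonneg m
  have hnum : 2 * m * x * (1 - x) + 12 * x ^ 2 - 8 * ((i : ℝ) + 1) * x + (i + 1) * (i + 2)
      ≤ m / 2 + 6 := by
    interval_cases i <;> push_cast <;>
      nlinarith [mul_nonneg hm (sq_nonneg (2 * x - 1)), mul_nonneg hx0 (sub_nonneg.2 hx1)]
  rw [sum_bern_mul_shifted_moment, div_le_div_iff₀ (by positivity) (by positivity)]
  nlinarith [mul_le_mul_of_nonneg_right hnum (by positivity : (0 : ℝ) ≤ m + 1)]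

lemma mul_add_nonneg_of_mem_Icc {a0 a1 x : ℝ} (h0 : 0 ≤ a0) (h01 : 0 ≤ a0 + a1)
    (hx : x ∈ Icc (0 : ℝ) 1) : 0 ≤ a1 * x + a0 := by
  nlinarith [mul_nonneg h01 hx.1, mul_nonneg h0 (sub_nonneg.2 hx.2)]

section ModifiedDurrmeyer

variable (a0 a1 : ℕ → ℝ)

lemma pM1_nonneg {n : ℕ} (h0 : 0 ≤ a0 n) (h01 : 0 ≤ a0 n + a1 n) (k : ℤ) {x : ℝ}
    (hx : x ∈ Icc (0 : ℝ) 1) : 0 ≤ pM1 a0 a1 n k x := by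
  have hx' : 1 - x ∈ Icc (0 : ℝ) 1 := ⟨by linarith [hx.2], by linarith [hx.1]⟩
  exact add_nonneg
    (mul_nonneg (mul_add_nonneg_of_mem_Icc h0 h01 hx) (bern_nonneg _ _ hx))
    (mul_nonneg (mul_add_nonneg_of_mem_Icc h0 h01 hx') (bern_nonneg _ _ hx))

noncomputable def DM1Kernel (n : ℕ) (x t : ℝ) : ℝ :=
  (n + 1) * ∑ k ∈ Finset.range (n + 1), pM1 a0 a1 n k x * bern n k t

lemma continuous_DM1Kernel (n : ℕ) (x : ℝ) : Continuous (DM1Kernel a0 a1 n x) :=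
  continuous_const.mul <| continuous_finsetSum _ fun k _ =>
    continuous_const.mul (continuous_bern n k)

lemma DM1Kernel_nonneg {n : ℕ} (h0 : 0 ≤ a0 n) (h01 : 0 ≤ a0 n + a1 n) {x t : ℝ}
    (hx : x ∈ Icc (0 : ℝ) 1) (ht : t ∈ Icc (0 : ℝ) 1) : 0 ≤ DM1Kernel a0 a1 n x t :=
  mul_nonneg (by positivity) <| Finset.sum_nonneg fun k _ =>
    mul_nonneg (pM1_nonneg a0 a1 h0 h01 k hx) (bern_nonneg n k ht)

lemma DM1_eq_integral_DM1Kernel (n : ℕ) {f : ℝ → ℝ}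
    (hf : IntervalIntegrable f volume 0 1) (x : ℝ) :
    DM1 a0 a1 n f x = ∫ t in (0 : ℝ)..1, DM1Kernel a0 a1 n x t * f t := by
  simp only [DM1, DM1Kernel, Finset.mul_sum, Finset.sum_mul]
  rw [integral_finsetSum fun k _ => hf.continuousOn_mul (by fun_prop)]
  refine Finset.sum_congr rfl fun k _ => ?_
  rw [← integral_const_mul, ← integral_const_mul]
  exact integral_congr fun t _ => by ring

lemma sum_pM1_mul (m : ℕ) (x : ℝ) (g : ℕ → ℝ) :
    ∑ k ∈ Finset.range (m + 2), pM1 a0 a1 (m + 1) k x * g k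
      = (a1 (m + 1) * x + a0 (m + 1)) * ∑ j ∈ Finset.range (m + 1), bern m j x * g j
        + (a1 (m + 1) * (1 - x) + a0 (m + 1)) *
          ∑ j ∈ Finset.range (m + 1), bern m j x * g (j + 1) := by
  have hlast : bern m (m + 1 : ℕ) x = 0 := by
    simp only [bern_natCast_eq_eval, bernsteinPolynomial.eq_zero_of_lt ℝ (Nat.lt_succ_self m),
      eval_zero]
  have hfirst : ∑ k ∈ Finset.range (m + 2), bern m k x * g k
      = ∑ j ∈ Finset.range (m + 1), bern m j x * g j := by
    rw [Finset.sum_range_succ, hlast, zero_mul, add_zero]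
  have hsecond : ∑ k ∈ Finset.range (m + 2), bern m (k - 1) x * g k
      = ∑ j ∈ Finset.range (m + 1), bern m j x * g (j + 1) := by
    rw [Finset.sum_range_succ']
    simp [bern_neg_one]
  rw [← hfirst, ← hsecond, Finset.mul_sum, Finset.mul_sum, ← Finset.sum_add_distrib]
  refine Finset.sum_congr rfl fun k _ => ?_
  rw [pM1, Nat.add_sub_cancel]
  ring

lemma DM1_eq_sum (n : ℕ) (f : ℝ → ℝ) (x : ℝ) :
    DM1 a0 a1 n f x = ∑ k ∈ Finset.range (n + 1),
      pM1 a0 a1 n k x * ((n + 1) * ∫ t in (0 : ℝ)..1, bern n k t * f t) := by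
  rw [DM1, Finset.mul_sum]
  exact Finset.sum_congr rfl fun k _ => by ring

lemma DM1_succ_one (m : ℕ) (hA : 2 * a0 (m + 1) + a1 (m + 1) = 1) (x : ℝ) :
    DM1 a0 a1 (m + 1) (fun _ => 1) x = 1 := by
  have hcoeff : ∀ k ∈ Finset.range (m + 2),
      pM1 a0 a1 (m + 1) k x * (((m + 1 : ℕ) + 1) * ∫ t in (0 : ℝ)..1, bern (m + 1) k t * 1)
        = pM1 a0 a1 (m + 1) k x * 1 := fun k hk => by
    simp only [mul_one]
    rw [integral_bern _ _ (Finset.mem_range_succ_iff.mp hk)]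
    field_simp
  rw [DM1_eq_sum, Finset.sum_congr rfl hcoeff, sum_pM1_mul]
  simp only [mul_one, sum_bern]
  linear_combination hA

lemma DM1_succ_sq_sub_le (m : ℕ) (hA : 2 * a0 (m + 1) + a1 (m + 1) = 1)
    (h0 : 0 ≤ a0 (m + 1)) (h01 : 0 ≤ a0 (m + 1) + a1 (m + 1)) {x : ℝ} (hx : x ∈ Icc (0 : ℝ) 1) :
    DM1 a0 a1 (m + 1) (fun t => (t - x) ^ 2) x ≤ 1 / (m + 1) := by
  have hshift : ∀ i ≤ 1, ∑ j ∈ Finset.range (m + 1), bern m j x *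
      (((m + 1 : ℕ) + 1) * ∫ t in (0 : ℝ)..1, bern (m + 1) (j + i : ℕ) t * (t - x) ^ 2)
        ≤ 1 / (m + 1) := fun i hi => by
    refine le_of_eq_of_le (Finset.sum_congr rfl fun j hj => ?_)
      (sum_bern_mul_shifted_moment_le m i hi hx)
    rw [integral_bern_mul_sq_sub _ _ (by simp at hj; omega)]
    push_cast
    ring
  have hx' : 1 - x ∈ Icc (0 : ℝ) 1 := ⟨by linarith [hx.2], by linarith [hx.1]⟩
  have hA0 := mul_add_nonneg_of_mem_Icc h0 h01 hx
  have hA1 := mul_add_nonneg_of_mem_Icc h0 h01 hx'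
  have hS0 := hshift 0 zero_le_one
  have hS1 := hshift 1 le_rfl
  simp only [add_zero] at hS0
  have hweights : (a1 (m + 1) * x + a0 (m + 1)) * (1 / (m + 1))
      + (a1 (m + 1) * (1 - x) + a0 (m + 1)) * (1 / (m + 1)) = 1 / (m + 1) := by
    rw [← add_mul, show a1 (m + 1) * x + a0 (m + 1) + (a1 (m + 1) * (1 - x) + a0 (m + 1)) = 1 by
      linear_combination hA, one_mul]
  rw [DM1_eq_sum, sum_pM1_mul]
  linarith [mul_le_mul_of_nonneg_left hS0 hA0, mul_le_mul_of_nonneg_left hS1 hA1]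

end ModifiedDurrmeyer

theorem DM1_uniform_convergence_positive_case (a0 a1 : ℕ → ℝ)
    (hA : ∀ n, 2 * a0 n + a1 n = 1)
    (h0 : ∀ n, 0 ≤ a0 n) (h01 : ∀ n, 0 ≤ a0 n + a1 n)
    (f : ℝ → ℝ) (hf : ContinuousOn f (Set.Icc 0 1)) :
    TendstoUniformlyOn (fun n x => DM1 a0 a1 n f x) f atTop (Set.Icc 0 1) := by
  have hint : ∀ {g : ℝ → ℝ}, ContinuousOn g (Icc 0 1) → IntervalIntegrable g volume 0 1 :=
    fun hg => hg.intervalIntegrable_of_Icc zero_le_one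
  refine (tendstoUniformlyOn_integral_mul_of_kernel zero_le_one (K := DM1Kernel a0 a1)
    (β := fun n => 1 / n) (fun n x => (continuous_DM1Kernel a0 a1 n x).continuousOn) ?_ ?_ ?_
    tendsto_one_div_atTop_nhds_zero_nat hf).congr ?_
  · exact Eventually.of_forall fun n x hx t ht => DM1Kernel_nonneg a0 a1 (h0 n) (h01 n) hx ht
  · filter_upwards [eventually_ne_atTop 0] with n hn x _
    obtain ⟨m, rfl⟩ := Nat.exists_eq_add_one_of_ne_zero hn
    have h := DM1_succ_one a0 a1 m (hA _) x
    rw [DM1_eq_integral_DM1Kernel a0 a1 _ (hint continuousOn_const)] at h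
    simpa using h
  · filter_upwards [eventually_ne_atTop 0] with n hn x hx
    obtain ⟨m, rfl⟩ := Nat.exists_eq_add_one_of_ne_zero hn
    have h := DM1_succ_sq_sub_le a0 a1 m (hA _) (h0 _) (h01 _) hx
    rw [DM1_eq_integral_DM1Kernel a0 a1 _ (hint (by fun_prop))] at h
    simpa using h
  · exact Eventually.of_forall fun n x _ => (DM1_eq_integral_DM1Kernel a0 a1 n (hint hf) x).symm
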